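/- Let Ω be a locally compact Hausdorff space with no isolated points, and let T : C₀(Ω) → C₀(Ω) be a ℂ-linear map (not assumed continuous) such that f·g = 0 implies T(f)·g = 0 for all f, g ∈ C₀(Ω). Then T is bounded, and there exists a bounded continuous function h ∈ C_b(Ω) with T(f) = h·f for all f ∈ C₀(Ω). -/

import Mathlib

/-!
A local operator only sees germs: if `f` vanishes near `x`, then `T f x = 0` (multiply `f` by a
bump at `x`). The key step is that `f ω = 0` already forces `T f ω = 0`. Otherwise, as `ω` is not
isolated, there are bumps `φₙ` with pairwise disjoint supports, placed in shrinking neighbourhoods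
of `ω` on which `‖f‖ < 4⁻ⁿ` and `‖T f‖ > c > 0`. Then `g = ∑ 2ⁿ φₙ f` converges in `C₀` and equals
`2ⁿ f` near a point `xₙ` of the `n`-th support, so `‖T g‖ ≥ 2ⁿ c` for all `n`.
Consequently `T f ω = h ω * f ω` with `h ω = T e ω` for any `e` with `e ω = 1`, and `h` is
continuous since it agrees near `ω` with `T e`. A multiplication operator has closed graph, so `T`
is bounded, and testing `T` on bumps of norm one gives `‖h ω‖ ≤ ‖T‖`.
-/

open ZeroAtInfty BoundedContinuousFunction Topology Filter Function

namespace ZeroAtInftyContinuousMap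

section Normed

variable {α : Type*} [TopologicalSpace α]

theorem norm_apply_le {β : Type*} [NormedAddCommGroup β] (f : C₀(α, β)) (x : α) :
    ‖f x‖ ≤ ‖f‖ :=
  f.toBCF.norm_coe_le_norm x

theorem norm_le_of_forall_le {β : Type*} [NormedAddCommGroup β] {f : C₀(α, β)} {C : ℝ}
    (hC : 0 ≤ C) (h : ∀ x, ‖f x‖ ≤ C) : ‖f‖ ≤ C :=
  (BoundedContinuousFunction.norm_le hC).2 h

section NormedField

variable {𝕜 : Type*} [NormedField 𝕜]

variable (𝕜) in
noncomputable def evalCLM (x : α) : C₀(α, 𝕜) →L[𝕜] 𝕜 :=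
  LinearMap.mkContinuous
    { toFun f := f x
      map_add' _ _ := rfl
      map_smul' _ _ := rfl }
    1 fun f => by simpa using norm_apply_le f x

@[simp]
theorem evalCLM_apply (x : α) (f : C₀(α, 𝕜)) : evalCLM 𝕜 x f = f x :=
  rfl

theorem tsum_apply {ι : Type*} {t : ι → C₀(α, 𝕜)} (ht : Summable t) (x : α) :
    (∑' i, t i) x = ∑' i, t i x :=
  (evalCLM 𝕜 x).map_tsum ht

end NormedField

theorem continuous_of_apply_eq_mul {𝕜 : Type*} [NontriviallyNormedField 𝕜] [CompleteSpace 𝕜]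
    {T : C₀(α, 𝕜) →ₗ[𝕜] C₀(α, 𝕜)} (h : α → 𝕜) (hT : ∀ f x, T f x = h x * f x) :
    Continuous T :=
  T.continuous_of_seq_closed_graph fun u f g hu hTu => ext fun x => by
    refine tendsto_nhds_unique (((evalCLM 𝕜 x).continuous.tendsto g).comp hTu) ?_
    simpa [Function.comp_def, hT] using
      (((evalCLM 𝕜 x).continuous.tendsto f).comp hu).const_mul (h x)

end Normed

section RCLike

variable {Ω 𝕜 : Type*} [TopologicalSpace Ω] [RCLike 𝕜]

theorem exists_eventuallyEq_two_pow_smul {f : C₀(Ω, 𝕜)} {x : ℕ → Ω} {φ : ℕ → C₀(Ω, 𝕜)}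
    (hdisj : Pairwise (Disjoint on fun n => tsupport (φ n))) (hφx : ∀ n, φ n =ᶠ[𝓝 (x n)] 1)
    (hφ : ∀ n, ‖φ n‖ ≤ 1) (hf : ∀ n, ∀ y ∈ tsupport (φ n), ‖f y‖ ≤ (1 / 4) ^ n) :
    ∃ g : C₀(Ω, 𝕜), ∀ n, g =ᶠ[𝓝 (x n)] ⇑((2 ^ n : 𝕜) • f) := by
  set t : ℕ → C₀(Ω, 𝕜) := fun n => (2 ^ n : 𝕜) • (φ n * f)
  have ht_zero : ∀ n y, y ∉ tsupport (φ n) → t n y = 0 := fun n y hy => by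
    simp [t, image_eq_zero_of_notMem_tsupport hy]
  have ht_norm : ∀ n, ‖t n‖ ≤ (1 / 2) ^ n := fun n => by
    refine norm_le_of_forall_le (by positivity) fun y => ?_
    by_cases hy : y ∈ tsupport (φ n)
    · calc ‖t n y‖ = 2 ^ n * (‖φ n y‖ * ‖f y‖) := by simp [t]
        _ ≤ 2 ^ n * (1 * (1 / 4) ^ n) := by
          gcongr
          exacts [(norm_apply_le _ _).trans (hφ n), hf n y hy]
        _ = (1 / 2) ^ n := by rw [one_mul, ← mul_pow]; norm_num
    · rw [ht_zero n y hy, norm_zero]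
      positivity
  have hsum : Summable t := .of_norm_bounded summable_geometric_two ht_norm
  refine ⟨∑' n, t n, fun n => ?_⟩
  filter_upwards [hφx n] with y hy
  have hyn : y ∈ tsupport (φ n) := subset_tsupport _ (by simp [hy])
  rw [tsum_apply hsum,
    tsum_eq_single n fun k hk => ht_zero k y fun hyk => Set.disjoint_left.1 (hdisj hk) hyk hyn]
  simp only [t, smul_apply, mul_apply, hy, Pi.one_apply, one_mul]

def IsLocal (T : C₀(Ω, 𝕜) →ₗ[𝕜] C₀(Ω, 𝕜)) : Prop :=
  ∀ f g : C₀(Ω, 𝕜), f * g = 0 → T f * g = 0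

end RCLike

variable {Ω 𝕜 : Type*} [TopologicalSpace Ω] [LocallyCompactSpace Ω] [T2Space Ω] [RCLike 𝕜]

theorem exists_eventuallyEq_one {x : Ω} {V : Set Ω} (hV : V ∈ 𝓝 x) :
    ∃ φ : C₀(Ω, 𝕜), tsupport φ ⊆ V ∧ φ =ᶠ[𝓝 x] 1 ∧ ‖φ‖ ≤ 1 := by
  obtain ⟨K, hK, hxK, hKV⟩ :=
    exists_compact_subset isOpen_interior (mem_interior_iff_mem_nhds.2 hV)
  obtain ⟨ψ, hψK, hψc, hψV, hψ01⟩ :=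
    exists_continuousMap_one_of_isCompact_subset_isOpen hK isOpen_interior hKV
  let φ : C₀(Ω, 𝕜) :=
    ⟨⟨(↑) ∘ ψ, by fun_prop⟩,
      (HasCompactSupport.comp_left hψc RCLike.ofReal_zero).is_zero_at_infty⟩
  refine ⟨φ, (tsupport_comp_subset RCLike.ofReal_zero ψ).trans (hψV.trans interior_subset), ?_, ?_⟩
  · filter_upwards [mem_interior_iff_mem_nhds.1 hxK] with y hy
    simp [φ, hψK hy]
  · refine norm_le_of_forall_le zero_le_one fun y => ?_
    have : ‖φ y‖ = ψ y := by simp [φ, abs_of_nonneg (hψ01 y).1]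
    exact this ▸ (hψ01 y).2

theorem exists_seq_eventuallyEq_one_pairwise_disjoint {ω : Ω} (hω : (𝓝[≠] ω).NeBot)
    {U : ℕ → Set Ω} (hU : ∀ n, U n ∈ 𝓝 ω) :
    ∃ (x : ℕ → Ω) (φ : ℕ → C₀(Ω, 𝕜)), (∀ n, tsupport (φ n) ⊆ U n) ∧
      Pairwise (Disjoint on fun n => tsupport (φ n)) ∧ (∀ n, φ n =ᶠ[𝓝 (x n)] 1) ∧
      ∀ n, ‖φ n‖ ≤ 1 := by
  have step : ∀ N ∈ 𝓝 ω, ∃ (x : Ω) (φ : C₀(Ω, 𝕜)), tsupport φ ⊆ N ∧ ω ∉ tsupport φ ∧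
      φ =ᶠ[𝓝 x] 1 ∧ ‖φ‖ ≤ 1 := by
    intro N hN
    have hW : interior N ∩ {ω}ᶜ ∈ 𝓝[≠] ω :=
      inter_mem (mem_nhdsWithin_of_mem_nhds (interior_mem_nhds.2 hN)) self_mem_nhdsWithin
    obtain ⟨x, hx⟩ := nonempty_of_mem hW
    obtain ⟨φ, hφW, hφx, hφ⟩ := exists_eventuallyEq_one (𝕜 := 𝕜)
      ((isOpen_interior.inter isOpen_compl_singleton).mem_nhds hx)
    exact ⟨x, φ, hφW.trans (Set.inter_subset_left.trans interior_subset),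
      fun h => (hφW h).2 rfl, hφx, hφ⟩
  have : Nonempty Ω := ⟨ω⟩
  choose! x φ hφN hωφ hφx hφ using step
  -- `N n` is a neighbourhood of `ω` that avoids the supports of all earlier bumps.
  obtain ⟨N, hN0, hNsucc⟩ : ∃ N : ℕ → Set Ω, N 0 = U 0 ∧
      ∀ n, N (n + 1) = N n ∩ U (n + 1) ∩ (tsupport (φ (N n)))ᶜ :=
    ⟨fun n => Nat.rec (U 0) (fun n Nn => Nn ∩ U (n + 1) ∩ (tsupport (φ Nn))ᶜ) n, rfl,
      fun _ => rfl⟩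
  have hN : ∀ n, N n ∈ 𝓝 ω := by
    intro n
    induction n with
    | zero => exact hN0 ▸ hU 0
    | succ n ih =>
      rw [hNsucc]
      exact inter_mem (inter_mem ih (hU _))
        ((isClosed_tsupport _).isOpen_compl.mem_nhds (hωφ _ ih))
  have hNU : ∀ n, N n ⊆ U n := by
    rintro (_ | n)
    · exact hN0.subset
    · exact hNsucc n ▸ Set.inter_subset_left.trans Set.inter_subset_right
  have hNanti : Antitone N :=
    antitone_nat_of_succ_le fun n => hNsucc n ▸ Set.inter_subset_left.trans Set.inter_subset_left
  refine ⟨fun n => x (N n), fun n => φ (N n), fun n => (hφN _ (hN n)).trans (hNU n), ?_,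
    fun n => hφx _ (hN n), fun n => hφ _ (hN n)⟩
  refine (pairwise_disjoint_on _).2 fun m n hmn => Set.disjoint_right.2 fun y hy => ?_
  have hy' : y ∈ N (m + 1) := hNanti hmn (hφN _ (hN n) hy)
  rw [hNsucc] at hy'
  exact hy'.2

namespace IsLocal

variable {T : C₀(Ω, 𝕜) →ₗ[𝕜] C₀(Ω, 𝕜)}

theorem apply_eq_zero_of_eventuallyEq_zero (hT : IsLocal T) {f : C₀(Ω, 𝕜)} {x : Ω}
    (hf : f =ᶠ[𝓝 x] 0) : T f x = 0 := by
  obtain ⟨φ, hφf, hφx, -⟩ := exists_eventuallyEq_one (𝕜 := 𝕜) hf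
  have hfφ : f * φ = 0 := ext fun y => by
    by_cases hy : y ∈ tsupport φ
    · simp [show f y = 0 from hφf hy]
    · simp [image_eq_zero_of_notMem_tsupport hy]
  simpa [hφx.eq_of_nhds] using congr($(hT f φ hfφ) x)

theorem apply_congr (hT : IsLocal T) {f g : C₀(Ω, 𝕜)} {x : Ω} (h : f =ᶠ[𝓝 x] g) :
    T f x = T g x := by
  have := hT.apply_eq_zero_of_eventuallyEq_zero (f := f - g) (by simpa using h.sub_eq)
  rwa [map_sub, sub_apply, sub_eq_zero] at this

theorem apply_eq_zero_of_apply_eq_zero (hT : IsLocal T) {ω : Ω} (hω : (𝓝[≠] ω).NeBot)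
    {f : C₀(Ω, 𝕜)} (hf : f ω = 0) : T f ω = 0 := by
  by_contra hne
  set c := ‖T f ω‖ / 2
  have hc : 0 < c := by positivity
  have hU : ∀ n : ℕ, {y | c < ‖T f y‖ ∧ ‖f y‖ < (1 / 4) ^ n} ∈ 𝓝 ω := fun n =>
    ((isOpen_lt continuous_const (T f).continuous.norm).inter
      (isOpen_lt f.continuous.norm continuous_const)).mem_nhds
      ⟨half_lt_self (norm_pos_iff.2 hne), by simp [hf]⟩
  obtain ⟨x, φ, hφU, hdisj, hφx, hφ⟩ :=
    exists_seq_eventuallyEq_one_pairwise_disjoint (𝕜 := 𝕜) hω hU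
  obtain ⟨g, hg⟩ := exists_eventuallyEq_two_pow_smul hdisj hφx hφ fun n y hy => (hφU n hy).2.le
  have hTg : ∀ n, 2 ^ n * c ≤ ‖T g‖ := fun n => by
    have hxn : x n ∈ tsupport (φ n) := subset_tsupport _ (by simp [(hφx n).eq_of_nhds])
    calc 2 ^ n * c ≤ 2 ^ n * ‖T f (x n)‖ := by gcongr; exact (hφU n hxn).1.le
      _ = ‖T g (x n)‖ := by simp [hT.apply_congr (hg n)]
      _ ≤ ‖T g‖ := norm_apply_le _ _
  obtain ⟨n, hn⟩ := pow_unbounded_of_one_lt (‖T g‖ / c) one_lt_two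
  rw [div_lt_iff₀ hc] at hn
  linarith [hTg n]

theorem apply_eq_apply_mul (hT : IsLocal T) {ω : Ω} (hω : (𝓝[≠] ω).NeBot) {e : C₀(Ω, 𝕜)}
    (he : e ω = 1) (f : C₀(Ω, 𝕜)) : T f ω = T e ω * f ω := by
  have := hT.apply_eq_zero_of_apply_eq_zero hω (f := f - f ω • e) (by simp [he])
  simpa [sub_eq_zero, mul_comm] using this

theorem exists_continuous_apply_eq_mul (hT : IsLocal T) (hni : ∀ ω : Ω, (𝓝[≠] ω).NeBot) :
    ∃ h : C(Ω, 𝕜), ∀ (f : C₀(Ω, 𝕜)) (ω : Ω), T f ω = h ω * f ω := by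
  choose e _ he _ using fun ω : Ω => exists_eventuallyEq_one (𝕜 := 𝕜) (univ_mem (f := 𝓝 ω))
  have he1 : ∀ ω, e ω ω = 1 := fun ω => (he ω).eq_of_nhds
  refine ⟨⟨fun ω => T (e ω) ω, continuous_iff_continuousAt.2 fun ω₀ => ?_⟩,
    fun f ω => hT.apply_eq_apply_mul (hni ω) (he1 ω) f⟩
  refine (T (e ω₀)).continuous.continuousAt.congr ?_
  filter_upwards [he ω₀] with ω hω
  change T (e ω₀) ω = T (e ω) ω
  rw [hT.apply_eq_apply_mul (hni ω) (he1 ω) (e ω₀), hω, Pi.one_apply, mul_one]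

end IsLocal

theorem norm_le_opNorm_of_apply_eq_mul (T : C₀(Ω, 𝕜) →L[𝕜] C₀(Ω, 𝕜)) {h : Ω → 𝕜}
    (hT : ∀ f ω, T f ω = h ω * f ω) (ω : Ω) : ‖h ω‖ ≤ ‖T‖ := by
  obtain ⟨e, -, he, he_le⟩ := exists_eventuallyEq_one (𝕜 := 𝕜) (univ_mem (f := 𝓝 ω))
  calc ‖h ω‖ = ‖T e ω‖ := by rw [hT, he.eq_of_nhds, Pi.one_apply, mul_one]
    _ ≤ ‖T e‖ := norm_apply_le _ _
    _ ≤ ‖T‖ * ‖e‖ := T.le_opNorm e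
    _ ≤ ‖T‖ := mul_le_of_le_one_right T.opNorm_nonneg he_le

end ZeroAtInftyContinuousMap

open ZeroAtInftyContinuousMap

theorem stmt_6
    {Ω : Type*} [TopologicalSpace Ω] [LocallyCompactSpace Ω] [T2Space Ω]
    (hni : ∀ ω : Ω, (𝓝[≠] ω).NeBot)
    (T : C₀(Ω, ℂ) →ₗ[ℂ] C₀(Ω, ℂ))
    (hloc : ∀ f g : C₀(Ω, ℂ), f * g = 0 → T f * g = 0) :
    (∃ C : ℝ, ∀ f : C₀(Ω, ℂ), ‖T f‖ ≤ C * ‖f‖) ∧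
      ∃ h : Ω →ᵇ ℂ, ∀ (f : C₀(Ω, ℂ)) (ω : Ω), T f ω = h ω * f ω := by
  obtain ⟨h, hT⟩ := IsLocal.exists_continuous_apply_eq_mul hloc hni
  let T' : C₀(Ω, ℂ) →L[ℂ] C₀(Ω, ℂ) := ⟨T, continuous_of_apply_eq_mul h hT⟩
  exact ⟨⟨‖T'‖, T'.le_opNorm⟩,
    .ofNormedAddCommGroup h h.continuous ‖T'‖ (norm_le_opNorm_of_apply_eq_mul T' hT), hT⟩
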